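/- Let F = diag(f₁,f₂,f₃) with f₁,f₂,f₃ ≥ 0, P = exp(hat(y)) ∈ SO(3) with y ∈ R^3, and let 𝔠 be the cyclic permutations of (1,2,3). Then Φ = (1/2)·tr(F(I − P)) satisfies Φ = ((1−cos‖y‖)/(2‖y‖²))·Σ_{(i,j,k)∈𝔠}(f_i+f_j)·y_k². -/

import Mathlib

open Matrix

noncomputable def hat (x : Fin 3 → ℝ) : Matrix (Fin 3) (Fin 3) ℝ :=
  !![0, -x 2, x 1; x 2, 0, -x 0; -x 1, x 0, 0]

noncomputable def vee (A : Matrix (Fin 3) (Fin 3) ℝ) : Fin 3 → ℝ := ![A 2 1, A 0 2, A 1 0]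

def IsSO3 (R : Matrix (Fin 3) (Fin 3) ℝ) : Prop := Rᵀ * R = 1 ∧ R.det = 1

noncomputable def enorm3 (x : Fin 3 → ℝ) : ℝ := Real.sqrt (∑ i, x i ^ 2)

/-!
With `θ = ‖y‖`, the matrix `A = hat y` satisfies `A ^ 3 = -θ ^ 2 • A`, so in the exponential
series the odd powers are multiples of `A` and the even ones (past `1`) multiples of `A ^ 2`.
Summing them against the sine and cosine series gives Rodrigues' formula
`exp A = 1 + (sin θ / θ) • A + ((1 - cos θ) / θ ^ 2) • A ^ 2`.
For diagonal `F`, `tr (F * A) = 0` because `A` has zero diagonal, and `tr (F * A ^ 2)` is minus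
the cyclic sum `∑ (f_i + f_j) y_k ^ 2`.
-/

open scoped Nat
open NormedSpace

section PowThree

variable {R A : Type*} [CommSemiring R] [Semiring A] [Algebra R A] {a : A} {c : R}

theorem pow_two_mul_add_one_of_pow_three_eq_smul (ha : a ^ 3 = c • a) (k : ℕ) :
    a ^ (2 * k + 1) = c ^ k • a := by
  induction k with
  | zero => simp
  | succ k ih =>
    rw [show 2 * (k + 1) + 1 = 2 * k + 1 + 2 by ring, pow_add, ih, smul_mul_assoc, ← pow_succ',
      ha, smul_smul, pow_succ]

theorem pow_two_mul_add_two_of_pow_three_eq_smul (ha : a ^ 3 = c • a) (k : ℕ) :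
    a ^ (2 * k + 2) = c ^ k • a ^ 2 := by
  rw [pow_succ, pow_two_mul_add_one_of_pow_three_eq_smul ha, smul_mul_assoc, ← sq]

end PowThree

theorem Real.hasSum_one_sub_cos (θ : ℝ) :
    HasSum (fun k : ℕ => (-1) ^ k * θ ^ (2 * k + 2) / (2 * k + 2)!) (1 - Real.cos θ) := by
  have h := ((hasSum_nat_add_iff' 1).mpr (Real.hasSum_cos θ)).neg
  norm_num at h
  exact h.congr_fun fun k => by rw [mul_add, mul_one]; ring

theorem exp_eq_of_pow_three_eq_neg_sq_smul {𝔸 : Type*} [NormedRing 𝔸] [NormedAlgebra ℝ 𝔸]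
    [CompleteSpace 𝔸] {a : 𝔸} {θ : ℝ} (hθ : θ ≠ 0) (ha : a ^ 3 = (-θ ^ 2) • a) :
    exp a = 1 + (Real.sin θ / θ) • a + ((1 - Real.cos θ) / θ ^ 2) • a ^ 2 := by
  have hodd : HasSum (fun k : ℕ => ((2 * k + 1)! : ℝ)⁻¹ • a ^ (2 * k + 1))
      ((Real.sin θ / θ) • a) := by
    refine (((Real.hasSum_sin θ).div_const θ).smul_const a).congr_fun fun k => ?_
    rw [pow_two_mul_add_one_of_pow_three_eq_smul ha, smul_smul]
    refine congrArg (· • a) ?_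
    rw [neg_pow, ← pow_mul, pow_succ]
    field_simp
  have heven : HasSum (fun k : ℕ => ((2 * k + 2)! : ℝ)⁻¹ • a ^ (2 * k + 2))
      (((1 - Real.cos θ) / θ ^ 2) • a ^ 2) := by
    refine (((Real.hasSum_one_sub_cos θ).div_const (θ ^ 2)).smul_const (a ^ 2)).congr_fun
      fun k => ?_
    rw [pow_two_mul_add_two_of_pow_three_eq_smul ha, smul_smul]
    refine congrArg (· • a ^ 2) ?_
    rw [neg_pow, ← pow_mul, pow_add]
    field_simp
  have htail := HasSum.even_add_odd (f := fun n => ((n + 1)! : ℝ)⁻¹ • a ^ (n + 1)) hodd heven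
  have hexp := (hasSum_nat_add_iff' 1).mpr (exp_series_hasSum_exp' (𝕂 := ℝ) a)
  rw [add_assoc, htail.unique hexp]
  simp

theorem enorm3_sq (y : Fin 3 → ℝ) : enorm3 y ^ 2 = y 0 ^ 2 + y 1 ^ 2 + y 2 ^ 2 := by
  rw [enorm3, Real.sq_sqrt (by positivity), Fin.sum_univ_three]

theorem eq_zero_of_enorm3_eq_zero {y : Fin 3 → ℝ} (h : enorm3 y = 0) : y = 0 := by
  rw [enorm3, Real.sqrt_eq_zero (by positivity),
    Finset.sum_eq_zero_iff_of_nonneg fun i _ => sq_nonneg (y i)] at h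
  exact funext fun i => pow_eq_zero_iff two_ne_zero |>.mp (h i (Finset.mem_univ i))

theorem hat_zero : hat 0 = 0 := by
  ext i j
  fin_cases i <;> fin_cases j <;> simp [hat]

theorem hat_pow_three (y : Fin 3 → ℝ) : hat y ^ 3 = (-enorm3 y ^ 2) • hat y := by
  rw [enorm3_sq]
  ext i j
  fin_cases i <;> fin_cases j <;> simp [hat, pow_succ, mul_apply, Fin.sum_univ_three] <;> ring

theorem exp_hat {y : Fin 3 → ℝ} (hy : y ≠ 0) :
    exp (hat y) = 1 + (Real.sin (enorm3 y) / enorm3 y) • hat y +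
      ((1 - Real.cos (enorm3 y)) / enorm3 y ^ 2) • hat y ^ 2 := by
  -- `exp` depends only on the topology, so any Banach-algebra norm on matrices will do.
  let : NormedRing (Matrix (Fin 3) (Fin 3) ℝ) := Matrix.linftyOpNormedRing
  let : NormedAlgebra ℝ (Matrix (Fin 3) (Fin 3) ℝ) := Matrix.linftyOpNormedAlgebra
  exact exp_eq_of_pow_three_eq_neg_sq_smul (mt eq_zero_of_enorm3_eq_zero hy) (hat_pow_three y)

theorem trace_diagonal_mul_hat (d y : Fin 3 → ℝ) : trace (diagonal d * hat y) = 0 := by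
  simp [trace, Fin.sum_univ_three, mul_apply, hat]

theorem trace_diagonal_mul_hat_sq (d y : Fin 3 → ℝ) :
    trace (diagonal d * hat y ^ 2) =
      -((d 0 + d 1) * y 2 ^ 2 + (d 1 + d 2) * y 0 ^ 2 + (d 2 + d 0) * y 1 ^ 2) := by
  simp [trace, Fin.sum_univ_three, mul_apply, hat, sq]
  ring

theorem Phi_formula_general (f₁ f₂ f₃ : ℝ)
    (y : Fin 3 → ℝ) :
    let F : Matrix (Fin 3) (Fin 3) ℝ := Matrix.diagonal ![f₁, f₂, f₃]
    let P := NormedSpace.exp (hat y)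
    (1 / 2 : ℝ) * Matrix.trace (F * (1 - P)) =
      ((1 - Real.cos (enorm3 y)) / (2 * enorm3 y ^ 2)) *
        ((f₁ + f₂) * y 2 ^ 2 + (f₂ + f₃) * y 0 ^ 2 + (f₃ + f₁) * y 1 ^ 2) := by
  intro F P
  rcases eq_or_ne y 0 with rfl | hy
  · simp [P, hat_zero]
  have hθ : enorm3 y ≠ 0 := mt eq_zero_of_enorm3_eq_zero hy
  have hP : 1 - P = -((Real.sin (enorm3 y) / enorm3 y) • hat y) -
      ((1 - Real.cos (enorm3 y)) / enorm3 y ^ 2) • hat y ^ 2 := by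
    rw [show P = exp (hat y) from rfl, exp_hat hy]
    abel
  rw [hP, mul_sub, mul_neg, trace_sub, trace_neg, Matrix.mul_smul, Matrix.mul_smul, trace_smul,
    trace_smul, trace_diagonal_mul_hat, trace_diagonal_mul_hat_sq]
  simp only [smul_eq_mul, mul_zero, neg_zero, zero_sub, cons_val_zero, cons_val_one, cons_val]
  field_simp

theorem Phi_formula (f₁ f₂ f₃ : ℝ) (hf₁ : 0 ≤ f₁) (hf₂ : 0 ≤ f₂) (hf₃ : 0 ≤ f₃)
    (y : Fin 3 → ℝ) :
    let F : Matrix (Fin 3) (Fin 3) ℝ := Matrix.diagonal ![f₁, f₂, f₃]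
    let P := NormedSpace.exp (hat y)
    (1 / 2 : ℝ) * Matrix.trace (F * (1 - P)) =
      ((1 - Real.cos (enorm3 y)) / (2 * enorm3 y ^ 2)) *
        ((f₁ + f₂) * y 2 ^ 2 + (f₂ + f₃) * y 0 ^ 2 + (f₃ + f₁) * y 1 ^ 2) :=
  Phi_formula_general f₁ f₂ f₃ y
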